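/- arXiv:1504.00568 — 4 statements merged into one kernel-verified Lean document; each statement's English description precedes it below -/
import Mathlib

section
/- Let Γ₀ be obtained from a finite connected graph Γ by contracting a set F of edges, and regard C¹(Γ₀; ℤ/ℓ) as the subgroup of C¹(Γ; ℤ/ℓ) of cochains vanishing on F. Then the image of the exterior differential δ₀ on Γ₀ equals C¹(Γ₀; ℤ/ℓ) ∩ im δ, where δ is the exterior differential on Γ. -/
/-- A finite multigraph: each edge has a chosen orientation with a head and a tail. -/
structure Multigraph (V E : Type*) where
  head : E → V
  tail : E → V

namespace Multigraph

variable {V E : Type*} (G : Multigraph V E)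

/-- Oriented edges are pairs `(e, b)`; `b = true` is the chosen orientation. -/
def ohead (x : E × Bool) : V := if x.2 then G.head x.1 else G.tail x.1

def otail (x : E × Bool) : V := if x.2 then G.tail x.1 else G.head x.1

/-- Orientation reversal. -/
def bar (x : E × Bool) : E × Bool := (x.1, !x.2)

/-- Adjacency through edges in a subset `S`. -/
def Adj (S : Set E) (v w : V) : Prop :=
  ∃ e ∈ S, (G.head e = v ∧ G.tail e = w) ∨ (G.head e = w ∧ G.tail e = v)

/-- The graph is connected using only edges in `S`. -/
def ConnectedOn (S : Set E) : Prop := ∀ v w : V, Relation.ReflTransGen (G.Adj S) v w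

def Connected : Prop := G.ConnectedOn Set.univ

/-- An edge is separating if its removal disconnects the graph. -/
def Separating (e : E) : Prop := ¬ G.ConnectedOn {f | f ≠ e}

def IsLoop (e : E) : Prop := G.head e = G.tail e

/-- A circuit: a nonempty closed path of oriented edges with distinct underlying edges. -/
def IsCircuit (c : List (E × Bool)) : Prop :=
  c ≠ [] ∧ (c.map Prod.fst).Nodup ∧
  ∀ i (h : i < c.length),
    G.ohead (c.get ⟨i, h⟩) =
      G.otail (c.get ⟨(i + 1) % c.length, Nat.mod_lt _ (Nat.zero_lt_of_lt h)⟩)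

/-- Tree-like: every circuit is a loop (i.e. has length one). -/
def TreeLike : Prop := ∀ c, G.IsCircuit c → c.length = 1

/-- A spanning tree: a set of edges connecting all vertices and containing no circuit. -/
def IsSpanningTree (T : Set E) : Prop :=
  G.ConnectedOn T ∧ ∀ c, G.IsCircuit c → ¬ (∀ x ∈ c, x.1 ∈ T)

/-- The exterior differential, with `C¹` identified with functions on edges via the
chosen orientation. -/
def δf (ℓ : ℕ) : (V → ZMod ℓ) → (E → ZMod ℓ) :=
  fun a e => a (G.head e) - a (G.tail e)

def δhom (ℓ : ℕ) : (V → ZMod ℓ) →+ (E → ZMod ℓ) :=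
  AddMonoidHom.mk' (G.δf ℓ) (by
    intro a b
    funext e
    simp [δf]
    ring)

def δlin (ℓ : ℕ) : (V → ZMod ℓ) →ₗ[ZMod ℓ] (E → ZMod ℓ) where
  toFun := G.δf ℓ
  map_add' a b := by funext e; simp [δf]; ring
  map_smul' r a := by funext e; simp [δf]; ring

/-- A cut cochain: determined by a nonempty set of vertices `W`. -/
def IsCut (ℓ : ℕ) (b : E → ZMod ℓ) : Prop :=
  ∃ W : Set V, W.Nonempty ∧
    b = fun e => W.indicator (fun _ => 1) (G.head e) - W.indicator (fun _ => 1) (G.tail e)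

/-- Contraction of the edges in `F`. -/
def contract (F : Set E) : Multigraph (Quot (G.Adj F)) {e : E // e ∉ F} where
  head e := Quot.mk _ (G.head e.1)
  tail e := Quot.mk _ (G.tail e.1)

/-- The subgroup of cochains supported on `S` (vanishing off `S`). -/
def supportedOn (ℓ : ℕ) (S : Set E) : AddSubgroup (E → ZMod ℓ) where
  carrier := {b | ∀ e ∉ S, b e = 0}
  add_mem' := by intro a b ha hb e he; simp [ha e he, hb e he]
  zero_mem' := by intro e he; rfl
  neg_mem' := by intro a ha e he; simp [ha e he]

end Multigraph

/-- The odd extension of an edge function to oriented edges. -/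
def oval {E : Type*} {ℓ : ℕ} (b : E → ZMod ℓ) (x : E × Bool) : ZMod ℓ :=
  if x.2 then b x.1 else - b x.1

/-- The age of a cochain: the sum over edges of the representative in `{0, …, ℓ-1}`
divided by `ℓ`. -/
def age {E : Type*} [Fintype E] {ℓ : ℕ} (b : E → ZMod ℓ) : ℚ :=
  ∑ e, ((b e).val : ℚ) / ℓ

/-- identifying cochains on the contraction `Γ₀ = Γ/F` with cochains on `Γ`
vanishing on `F`, the image of `δ₀` equals `C¹(Γ₀) ∩ im δ`. -/
theorem range_delta_contract {V E : Type*} (G : Multigraph V E) (hconn : G.Connected)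
    (ℓ : ℕ) (F : Set E) [DecidablePred (· ∈ F)] (b₀ : {e : E // e ∉ F} → ZMod ℓ) :
    b₀ ∈ Set.range ((G.contract F).δf ℓ) ↔
      (fun e => if h : e ∈ F then 0 else b₀ ⟨e, h⟩) ∈ Set.range (G.δf ℓ) := by
  constructor
  · rintro ⟨a₀, rfl⟩
    refine ⟨fun v => a₀ (Quot.mk _ v), ?_⟩
    funext e
    by_cases h : e ∈ F
    · have hq : Quot.mk (G.Adj F) (G.head e) = Quot.mk (G.Adj F) (G.tail e) :=
        Quot.sound ⟨e, h, Or.inl ⟨rfl, rfl⟩⟩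
      simp [Multigraph.δf, h, hq]
    · simp [Multigraph.δf, Multigraph.contract, h]
  · rintro ⟨a, ha⟩
    have key : ∀ v w, G.Adj F v w → a v = a w := by
      rintro v w ⟨e, he, hor⟩
      have h0 : G.δf ℓ a e = 0 := by rw [ha]; simp [he]
      have heq : a (G.head e) = a (G.tail e) := sub_eq_zero.mp h0
      rcases hor with ⟨h1, h2⟩ | ⟨h1, h2⟩
      · rw [← h1, ← h2]; exact heq
      · rw [← h1, ← h2]; exact heq.symm
    refine ⟨Quot.lift a key, ?_⟩
    funext e
    have h := congrFun ha e.1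
    simp only [e.2, dif_neg, not_false_iff] at h
    simpa [Multigraph.δf, Multigraph.contract] using h
end

section
/- Let Γ be a finite connected graph with no multiple structure beyond a multigraph, ℓ a positive integer, and M ∈ C¹(Γ; ℤ/ℓ) nowhere zero. An even function a ∈ S(Γ; ℤ/ℓ) with aM ∈ im δ has support of size one if and only if that single edge is a separating edge of Γ. Consequently, the subgroup of im δ₀ generated by such single-edge elements is isomorphic to (ℤ/ℓ)^{#E_sep}. -/
namespace Multigraph

variable {V E : Type*} (G : Multigraph V E)

lemma adj_symm' {S : Set E} {v w : V} (h : G.Adj S v w) : G.Adj S w v := by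
  obtain ⟨e, he, h⟩ := h; exact ⟨e, he, h.symm⟩

lemma const_on_reach {ℓ : ℕ} (x : V → ZMod ℓ) (e₀ : E)
    (h0 : ∀ f, f ≠ e₀ → G.δf ℓ x f = 0) {v w : V}
    (h : Relation.ReflTransGen (G.Adj {f | f ≠ e₀}) v w) : x v = x w := by
  induction h with
  | refl => rfl
  | tail hab hbc ih =>
    obtain ⟨e, he, hc⟩ := hbc
    have hz := h0 e he
    simp only [δf, sub_eq_zero] at hz
    rcases hc with ⟨h1, h2⟩ | ⟨h1, h2⟩
    · rw [ih, ← h1, ← h2, hz]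
    · rw [ih, ← h1, ← h2, hz]

lemma connectedOn_of_ends (hconn : G.Connected) (e₀ : E)
    (h : Relation.ReflTransGen (G.Adj {f | f ≠ e₀}) (G.head e₀) (G.tail e₀)) :
    G.ConnectedOn {f | f ≠ e₀} := by
  have hsymm : Symmetric (G.Adj {f | f ≠ e₀}) := fun _ _ => G.adj_symm'
  intro v w
  induction hconn v w with
  | refl => exact Relation.ReflTransGen.refl
  | tail hab hbc ih =>
    refine ih.trans ?_
    obtain ⟨e, -, hc⟩ := hbc
    by_cases he : e = e₀
    · subst he
      rcases hc with ⟨h1, h2⟩ | ⟨h1, h2⟩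
      · exact h1 ▸ h2 ▸ h
      · exact h1 ▸ h2 ▸ ((@Relation.ReflTransGen.symmetric _ _ ⟨fun _ _ h' => hsymm h'⟩).symm _ _ h)
    · exact Relation.ReflTransGen.single ⟨e, he, hc⟩

lemma single_in_range (hconn : G.Connected) (e₀ : E) (hsep : G.Separating e₀)
    {ℓ : ℕ} (c : ZMod ℓ) :
    ∃ x : V → ZMod ℓ, G.δf ℓ x e₀ = c ∧ ∀ f, f ≠ e₀ → G.δf ℓ x f = 0 := by
  classical
  set R := Relation.ReflTransGen (G.Adj {f | f ≠ e₀}) with hR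
  refine ⟨fun v => if R (G.head e₀) v then c else 0, ?_, ?_⟩
  · simp only [δf]
    rw [if_pos Relation.ReflTransGen.refl, if_neg, sub_zero]
    intro h
    exact hsep (G.connectedOn_of_ends hconn e₀ h)
  · intro f hf
    simp only [δf, sub_eq_zero]
    have hiff : R (G.head e₀) (G.head f) ↔ R (G.head e₀) (G.tail f) := by
      constructor
      · intro h; exact h.tail ⟨f, hf, Or.inl ⟨rfl, rfl⟩⟩
      · intro h; exact h.tail ⟨f, hf, Or.inr ⟨rfl, rfl⟩⟩
    by_cases h : R (G.head e₀) (G.head f)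
    · rw [if_pos h, if_pos (hiff.mp h)]
    · rw [if_neg h, if_neg (fun h' => h (hiff.mpr h'))]

end Multigraph

/-- an even function `a` with `aM ∈ im δ` supported on a single edge exists
exactly when that edge is separating; and the subgroup of `im δ` generated by elements
supported on a single edge is isomorphic to `(ℤ/ℓ)^{#E_sep}`. -/
theorem single_edge_support_iff_separating {V E : Type*} [Fintype E]
    (G : Multigraph V E) (hconn : G.Connected) (ℓ : ℕ) [Fact ℓ.Prime]
    (M : E → ZMod ℓ) (hM : ∀ e, M e ≠ 0) :
    (∀ (a : E → ZMod ℓ) (e₀ : E), a e₀ ≠ 0 → (∀ f, f ≠ e₀ → a f = 0) →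
      ((fun e => a e * M e) ∈ Set.range (G.δf ℓ) ↔ G.Separating e₀)) ∧
    Nonempty
      ((AddSubgroup.closure {b : E → ZMod ℓ |
          b ∈ Set.range (G.δf ℓ) ∧ ∃ e₀ : E, ∀ f, f ≠ e₀ → b f = 0}) ≃+
        ({e : E | G.Separating e} → ZMod ℓ)) := by
  classical
  have part1 : ∀ (a : E → ZMod ℓ) (e₀ : E), a e₀ ≠ 0 → (∀ f, f ≠ e₀ → a f = 0) →
      ((fun e => a e * M e) ∈ Set.range (G.δf ℓ) ↔ G.Separating e₀) := by
    intro a e₀ ha0 haoff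
    constructor
    · rintro ⟨x, hx⟩ hcon
      have hoff : ∀ f, f ≠ e₀ → G.δf ℓ x f = 0 := by
        intro f hf
        rw [hx]
        simp [haoff f hf]
      have hxy : x (G.head e₀) = x (G.tail e₀) :=
        G.const_on_reach x e₀ hoff (hcon (G.head e₀) (G.tail e₀))
      have : G.δf ℓ x e₀ = 0 := by simp [Multigraph.δf, hxy]
      rw [hx] at this
      exact mul_ne_zero ha0 (hM e₀) this
    · intro hsep
      obtain ⟨x, hx0, hxoff⟩ := G.single_in_range hconn e₀ hsep (a e₀ * M e₀)
      refine ⟨x, funext fun e => ?_⟩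
      by_cases h : e = e₀
      · subst h; exact hx0
      · rw [hxoff e h, haoff e h, zero_mul]
  refine ⟨part1, ?_⟩
  set K := Multigraph.supportedOn ℓ {e | G.Separating e} with hK
  have hSK : AddSubgroup.closure {b : E → ZMod ℓ |
      b ∈ Set.range (G.δf ℓ) ∧ ∃ e₀ : E, ∀ f, f ≠ e₀ → b f = 0} = K := by
    apply le_antisymm
    · rw [AddSubgroup.closure_le]
      rintro b ⟨hbr, e₀, hboff⟩ e he
      by_cases hb0 : b e₀ = 0
      · by_cases h : e = e₀
        · subst h; exact hb0
        · exact hboff e h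
      · have hsep : G.Separating e₀ := by
          refine (part1 (fun f => b f * (M f)⁻¹) e₀ ?_ ?_).mp ?_
          · exact fun h => hb0 ((mul_eq_zero.mp h).resolve_right (inv_ne_zero (hM e₀)))
          · intro f hf; simp [hboff f hf]
          · have : (fun e => b e * (M e)⁻¹ * M e) = b := by
              funext f; exact inv_mul_cancel_right₀ (hM f) (b f)
            rwa [this]
        by_cases h : e = e₀
        · exact absurd (h ▸ hsep) he
        · exact hboff e h
    · intro b hb
      have hb' : b = ∑ e, Pi.single e (b e) := (Finset.univ_sum_single b).symm
      rw [hb']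
      refine AddSubgroup.sum_mem _ (fun e _ => ?_)
      by_cases hbe : b e = 0
      · rw [hbe, Pi.single_zero]; exact zero_mem _
      · apply AddSubgroup.subset_closure
        have hsep : G.Separating e := by
          by_contra h; exact hbe (hb e h)
        obtain ⟨x, hx0, hxoff⟩ := G.single_in_range hconn e hsep (b e)
        refine ⟨⟨x, funext fun f => ?_⟩, e, fun f hf => Pi.single_eq_of_ne hf _⟩
        by_cases h : f = e
        · subst h; rw [hx0, Pi.single_eq_same]
        · rw [hxoff f h, Pi.single_eq_of_ne h]
  have emap : K ≃+ ({e : E | G.Separating e} → ZMod ℓ) :=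
  { toFun := fun b e => b.1 e.1
    invFun := fun g => ⟨fun e => if h : G.Separating e then g ⟨e, h⟩ else 0,
      fun e he => dif_neg he⟩
    left_inv := by
      rintro ⟨b, hb⟩
      apply Subtype.ext
      funext e
      by_cases h : G.Separating e
      · simp [dif_pos h]
      · simp only [dif_neg h]
        exact (hb e h).symm
    right_inv := by
      intro g; funext e
      exact dif_pos e.2
    map_add' := fun a b => rfl }
  exact ⟨(AddEquiv.addSubgroupCongr hSK).trans emap⟩
end

section
/- Let (Γ₀, M) be a decorated graph with contractions to (Γᵢ, Mᵢ) for i = 1, ..., m covering Γ₀ (i.e., E(Γ₀) = ∪ᵢ E(Γᵢ)) and such that G(Γ₀) = Σᵢ G(Γᵢ). Then for every automorphism a ∈ G(Γ₀) supported on all of E(Γ₀), age(a) - #E(Γ₀) ≥ Σᵢ (age 𝒮_{(Γᵢ,Mᵢ)} - #E(Γᵢ)), where age 𝒮_{(Γᵢ,Mᵢ)} denotes the minimum age of a nonzero element of G(Γᵢ). -/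
section AgeAux

variable {E : Type*} [Fintype E] {ℓ : ℕ}

lemma age_nonneg (b : E → ZMod ℓ) : 0 ≤ age b :=
  Finset.sum_nonneg fun e _ => div_nonneg (Nat.cast_nonneg _) (Nat.cast_nonneg _)

lemma age_zero : age (0 : E → ZMod ℓ) = 0 := by
  rcases Nat.eq_zero_or_pos ℓ with h | h
  · subst h; simp [age, ZMod.val]
  · haveI : NeZero ℓ := ⟨h.ne'⟩
    simp [age, ZMod.val_zero]

lemma age_add_le (b c : E → ZMod ℓ) : age (b + c) ≤ age b + age c := by
  unfold age
  rw [← Finset.sum_add_distrib]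
  refine Finset.sum_le_sum fun e _ => ?_
  rw [← add_div]
  have hle : ((b e + c e).val : ℚ) ≤ ((b e).val : ℚ) + ((c e).val : ℚ) := by
    exact_mod_cast ZMod.val_add_le (b e) (c e)
  push_cast
  gcongr
  simpa using hle

lemma age_sum_le {ι : Type*} (s : Finset ι) (b : ι → E → ZMod ℓ) :
    age (∑ i ∈ s, b i) ≤ ∑ i ∈ s, age (b i) := by
  induction s using Finset.cons_induction with
  | empty => simp [age_zero]
  | cons i s hi ih =>
    rw [Finset.sum_cons, Finset.sum_cons]
    exact (age_add_le _ _).trans (by linarith)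

lemma sum_le_ncard (S : Set E) (f : E → ℚ) (h1 : ∀ e, f e ≤ 1)
    (h0 : ∀ e ∉ S, f e = 0) : ∑ e, f e ≤ (S.ncard : ℚ) := by
  classical
  rw [Set.ncard_eq_toFinset_card']
  rw [← Finset.sum_subset (Finset.subset_univ S.toFinset)
    (fun x _ hx => h0 x (by simpa using hx))]
  calc ∑ e ∈ S.toFinset, f e ≤ ∑ _e ∈ S.toFinset, (1 : ℚ) :=
        Finset.sum_le_sum fun e _ => h1 e
    _ = S.toFinset.card := by simp

end AgeAux

/-- superadditivity of `age − #E` with respect to a covering family of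
contractions `(Γᵢ, Mᵢ)` of the decorated graph `(Γ₀, M)`.  Here `G(Γᵢ)` is identified
with the subgroup of `G(Γ₀) = im δ` of cochains supported on `E(Γᵢ) = F i`, and
`μ i = age 𝒮_{(Γᵢ,Mᵢ)}` is the minimal age of a nonzero element of `G(Γᵢ)`. -/
theorem age_superadditive {V E : Type*} [Fintype V] [Fintype E]
    (G : Multigraph V E) (hconn : G.Connected) (ℓ : ℕ) [Fact ℓ.Prime]
    (M : E → ZMod ℓ) (hM : ∀ e, M e ≠ 0)
    (m : ℕ) (F : Fin m → Set E) (hcov : (⋃ i, F i) = Set.univ)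
    (hsum : (⨆ i, (G.δhom ℓ).range ⊓ Multigraph.supportedOn ℓ (F i)) = (G.δhom ℓ).range)
    (μ : Fin m → ℚ)
    (hμmin : ∀ i, (∃ b ∈ (G.δhom ℓ).range ⊓ Multigraph.supportedOn ℓ (F i), b ≠ 0 ∧ age b = μ i) ∧
      ∀ b ∈ (G.δhom ℓ).range ⊓ Multigraph.supportedOn ℓ (F i), b ≠ 0 → μ i ≤ age b)
    (a : E → ZMod ℓ) (haG : a ∈ (G.δhom ℓ).range) (hsupp : ∀ e, a e ≠ 0) :
    ∑ i, (μ i - ((F i).ncard : ℚ)) ≤ age a - (Fintype.card E : ℚ) := by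
  classical
  haveI : NeZero ℓ := ⟨(Fact.out : ℓ.Prime).ne_zero⟩
  have hℓpos : (0 : ℚ) < ℓ := by exact_mod_cast (Fact.out : ℓ.Prime).pos
  set P : Fin m → AddSubgroup (E → ZMod ℓ) :=
    fun i => (G.δhom ℓ).range ⊓ Multigraph.supportedOn ℓ (F i) with hP
  -- decompose -a
  have hna : -a ∈ ⨆ i, P i := by rw [hP, hsum]; exact neg_mem haG
  have hdecomp : ∃ b : Fin m → (E → ZMod ℓ), (∀ i, b i ∈ P i) ∧ -a = ∑ i, b i := by
    refine AddSubgroup.iSup_induction (C := fun x => ∃ b : Fin m → (E → ZMod ℓ),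
      (∀ i, b i ∈ P i) ∧ x = ∑ i, b i) P hna ?_ ?_ ?_
    · intro i x hx
      refine ⟨Function.update 0 i x, fun j => ?_, ?_⟩
      · rcases eq_or_ne j i with rfl | hji
        · simpa using hx
        · simp [Function.update_of_ne hji]
      · rw [Finset.sum_update_of_mem (Finset.mem_univ i)]
        simp
    · exact ⟨0, fun i => zero_mem _, by simp⟩
    · rintro x y ⟨b1, hb1, rfl⟩ ⟨b2, hb2, rfl⟩
      exact ⟨b1 + b2, fun i => add_mem (hb1 i) (hb2 i), by rw [← Finset.sum_add_distrib]; rfl⟩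
  obtain ⟨b, hbmem, hbsum⟩ := hdecomp
  -- pairing identity for nowhere-zero a
  have hpair : age a + age (-a) = (Fintype.card E : ℚ) := by
    unfold age
    rw [← Finset.sum_add_distrib]
    have : ∀ e : E, ((a e).val : ℚ) / ℓ + (((-a) e).val : ℚ) / ℓ = 1 := by
      intro e
      have hne : a e ≠ 0 := hsupp e
      have hv : ((-a) e).val = ℓ - (a e).val := by
        show (-(a e)).val = ℓ - (a e).val
        rw [ZMod.neg_val]; simp [hne]
      rw [hv, ← add_div, Nat.cast_sub (ZMod.val_lt (a e)).le]
      field_simp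
      ring
    rw [Finset.sum_congr rfl fun e _ => this e]
    simp
  -- bound each μ i ≤ ncard (F i)
  have hμle : ∀ i, μ i ≤ ((F i).ncard : ℚ) := by
    intro i
    obtain ⟨⟨c, hc, hcne, hcage⟩, _⟩ := hμmin i
    rw [← hcage]
    unfold age
    refine sum_le_ncard (F i) _ (fun e => ?_) (fun e he => ?_)
    · rw [div_le_one hℓpos]
      exact_mod_cast (ZMod.val_lt (c e)).le
    · rw [hc.2 e he]; simp [ZMod.val_zero]
  -- bound age (b i) ≤ ncard (F i) - μ i
  have hb_bound : ∀ i, age (b i) ≤ ((F i).ncard : ℚ) - μ i := by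
    intro i
    rcases eq_or_ne (b i) 0 with h0 | h0
    · rw [h0, age_zero]; linarith [hμle i]
    · have hneg : -(b i) ∈ P i := neg_mem (hbmem i)
      have hμi : μ i ≤ age (-(b i)) := (hμmin i).2 _ hneg (neg_ne_zero.mpr h0)
      have hsum2 : age (b i) + age (-(b i)) ≤ ((F i).ncard : ℚ) := by
        unfold age
        rw [← Finset.sum_add_distrib]
        refine sum_le_ncard (F i) _ (fun e => ?_) (fun e he => ?_)
        · rcases eq_or_ne (b i e) 0 with hz | hz
          · have : (-(b i)) e = 0 := by simp [Pi.neg_apply, hz]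
            rw [hz, this]; simp [ZMod.val_zero]
          · have hv : ((-(b i)) e).val = ℓ - (b i e).val := by
              show (-(b i e)).val = ℓ - (b i e).val
              rw [ZMod.neg_val]; simp [hz]
            rw [hv, ← add_div, Nat.cast_sub (ZMod.val_lt (b i e)).le]
            field_simp
            linarith
        · have hz : b i e = 0 := (hbmem i).2 e he
          have : (-(b i)) e = 0 := by simp [Pi.neg_apply, hz]
          rw [hz, this]; simp [ZMod.val_zero]
      linarith
  have hage_na : age (-a) ≤ ∑ i, (((F i).ncard : ℚ) - μ i) := by
    calc age (-a) = age (∑ i, b i) := by rw [hbsum]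
      _ ≤ ∑ i, age (b i) := age_sum_le _ _
      _ ≤ ∑ i, (((F i).ncard : ℚ) - μ i) := Finset.sum_le_sum fun i _ => hb_bound i
  have : ∑ i, (μ i - ((F i).ncard : ℚ)) = -∑ i, (((F i).ncard : ℚ) - μ i) := by
    rw [← Finset.sum_neg_distrib]; congr 1; funext i; ring
  rw [this]
  linarith
end

section
/- Let Γ be a graph with two vertices joined by n ≥ 2 edges and let M ∈ C¹(Γ; ℤ/3) be nowhere zero. If there exists a nonzero element a ∈ G(Γ) = im δ with age(a) < 1, then n = 2 and (up to swapping the two vertices) M takes value 1 on both edges (with both edges oriented from the first vertex to the second). -/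
/-- for `ℓ = 3` and a vine graph with two vertices joined by `n ≥ 2` edges
decorated by a nowhere-zero `M`, if there is a nonzero junior ghost automorphism (a
nonzero even function `s` with `sM ∈ im δ` and `age s < 1`), then `n = 2` and, up to
swapping the two vertices, `M` takes value `1` on both edges oriented from the first
vertex to the second. -/
theorem junior_vine_three {n : ℕ} (hn : 2 ≤ n) (G : Multigraph (Fin 2) (Fin n))
    (hG : ∀ e, (G.head e = 0 ∧ G.tail e = 1) ∨ (G.head e = 1 ∧ G.tail e = 0))
    (M : Fin n → ZMod 3) (hM : ∀ e, M e ≠ 0)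
    (h : ∃ s : Fin n → ZMod 3, s ≠ 0 ∧
      (fun e => s e * M e) ∈ Set.range (G.δf 3) ∧ age s < 1) :
    n = 2 ∧ ∃ v : Fin 2, ∀ e, (if G.tail e = v then M e else - M e) = 1 := by
  obtain ⟨s, hs0, ⟨a, ha⟩, hage⟩ := h
  have key : ∀ e, s e * M e = a (G.head e) - a (G.tail e) := by
    intro e
    have := congrFun ha e
    simpa [Multigraph.δf] using this.symm
  have h3 : (3 : ZMod 3) = 0 := by decide
  have hd0 : a 0 - a 1 ≠ 0 := by
    intro h0
    apply hs0
    funext e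
    have hk := key e
    have hz : s e * M e = 0 := by
      rcases hG e with ⟨h1, h2⟩ | ⟨h1, h2⟩ <;> rw [h1, h2] at hk
      · rw [hk, h0]
      · rw [hk]; linear_combination -h0
    rcases mul_eq_zero.mp hz with h' | h'
    · exact h'
    · exact absurd h' (hM e)
  have hse : ∀ e, s e ≠ 0 := by
    intro e h0
    have hk := key e
    rcases hG e with ⟨h1, h2⟩ | ⟨h1, h2⟩ <;> rw [h1, h2] at hk <;>
      rw [h0, zero_mul] at hk
    · exact hd0 hk.symm
    · apply hd0; linear_combination hk
  have hval1 : ∀ e, 1 ≤ (s e).val := by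
    intro e
    refine Nat.one_le_iff_ne_zero.mpr fun h0 => hse e ?_
    rwa [ZMod.val_eq_zero] at h0
  have hsum : ∑ e, (s e).val < 3 := by
    by_contra hc
    push_neg at hc
    have h1 : (1 : ℚ) ≤ age s := by
      unfold age
      rw [← Finset.sum_div, le_div_iff₀ (by norm_num)]
      push_cast
      calc (1 : ℚ) * 3 = 3 := by ring
        _ ≤ ∑ e, ((s e).val : ℚ) := by exact_mod_cast hc
    linarith
  have hnle : n ≤ ∑ e, (s e).val := by
    calc n = ∑ _e : Fin n, 1 := by simp
      _ ≤ ∑ e, (s e).val := Finset.sum_le_sum fun e _ => hval1 e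
  have hn2 : n = 2 := by omega
  have hval : ∀ e, (s e).val = 1 := by
    intro e
    have h1 : (s e).val + ∑ f ∈ Finset.univ.erase e, (s f).val = ∑ f, (s f).val := by
      simpa using Finset.add_sum_erase Finset.univ (fun f => (s f).val) (Finset.mem_univ e)
    have h2 : (Finset.univ.erase e).card ≤ ∑ f ∈ Finset.univ.erase e, (s f).val := by
      calc (Finset.univ.erase e).card = ∑ _f ∈ Finset.univ.erase e, 1 := by simp
        _ ≤ _ := Finset.sum_le_sum fun f _ => hval1 f
    have h4 : (Finset.univ.erase e).card = n - 1 := by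
      rw [Finset.card_erase_of_mem (Finset.mem_univ e)]
      simp
    have := hval1 e
    omega
  have hs1 : ∀ e, s e = 1 := by
    intro e
    have h1 : ((s e).val : ZMod 3) = s e := ZMod.natCast_rightInverse (s e)
    rw [← h1, hval e]
    norm_num
  have key' : ∀ e, M e = a (G.head e) - a (G.tail e) := by
    intro e
    have hk := key e
    rwa [hs1 e, one_mul] at hk
  refine ⟨hn2, ?_⟩
  have hd12 : a 0 - a 1 = 1 ∨ a 0 - a 1 = 2 := by
    generalize a 0 - a 1 = x at hd0
    revert x hd0; decide
  rcases hd12 with hd | hd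
  · refine ⟨1, fun e => ?_⟩
    rcases hG e with ⟨h1, h2⟩ | ⟨h1, h2⟩ <;> have hk := key' e <;> rw [h1, h2] at hk
    · rw [if_pos h2, hk, hd]
    · have hne : G.tail e ≠ 1 := by rw [h2]; decide
      rw [if_neg hne, hk]
      linear_combination hd
  · refine ⟨0, fun e => ?_⟩
    rcases hG e with ⟨h1, h2⟩ | ⟨h1, h2⟩ <;> have hk := key' e <;> rw [h1, h2] at hk
    · have hne : G.tail e ≠ 0 := by rw [h2]; decide
      rw [if_neg hne, hk]
      linear_combination -hd - h3
    · rw [if_pos h2, hk]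
      linear_combination -hd - h3
end
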